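/- Let A and B be unital algebras over a commutative ring R, M an (A,B)-bimodule faithful as a left A-module and as a right B-module, T = Tri(A, M, B) the triangular algebra, and R' an arbitrary ring. If (M, M*) is an elementary map on T × R' with both M and M* surjective, then both M and M* are additive. -/

import Mathlib

open MulOpposite

/-- The triangular algebra `Tri(A, M, B)`: formal 2×2 matrices `[[a, m],[0, b]]`
with `a ∈ A`, `m ∈ M`, `b ∈ B`. -/
structure Tri (A M B : Type*) where
  fst : A
  mid : M
  snd : B

namespace Tri

variable {A M B : Type*}

instance [Add A] [Add M] [Add B] : Add (Tri A M B) :=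
  ⟨fun x y => ⟨x.fst + y.fst, x.mid + y.mid, x.snd + y.snd⟩⟩

instance [Zero A] [Zero M] [Zero B] : Zero (Tri A M B) :=
  ⟨⟨0, 0, 0⟩⟩

/-- The usual matrix multiplication:
`[[a, m],[0, b]] * [[a', m'],[0, b']] = [[a a', a • m' + m • b'],[0, b b']]`,
where the right action of `B` on `M` is encoded via `Bᵐᵒᵖ`. -/
instance [Mul A] [Mul B] [Add M] [SMul A M] [SMul Bᵐᵒᵖ M] : Mul (Tri A M B) :=
  ⟨fun x y => ⟨x.fst * y.fst, x.fst • y.mid + op y.snd • x.mid, x.snd * y.snd⟩⟩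

end Tri

/-- `(f, g)` is an elementary map on `T × S`:
`f (a g(x) b) = f(a) x f(b)` and `g (x f(a) y) = g(x) a g(y)`. -/
def IsElementaryMap {T S : Type*} [Mul T] [Mul S] (f : T → S) (g : S → T) : Prop :=
  (∀ (a b : T) (x : S), f (a * g x * b) = f a * x * f b) ∧
  (∀ (x y : S) (a : T), g (x * f a * y) = g x * a * g y)

/-!
Surjectivity of both maps forces `f` and `g` to be injective, so `g` has an inverse `h`, and
`f (a u b) = f a * h u * f b`, `h (u a v) = h u * f a * h v`. If `f w = f s + f t`, these give
`h (u w v) = h (u s v) + h (u t v)` for all `u, v`; hence `w = s + t` whenever the sandwiches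
`u * _ * v` on which `h` is known to add up separate points.

The Peirce corners `eᵢ * _ * eⱼ` always separate points; with `h 0 = 0` this makes `f` additive
on elements with disjoint corners, and then on `M` through
`[[1, m'], [0, 0]] * [[0, m], [0, 1]] = [[0, m + m'], [0, 0]]`. By faithfulness the sandwiches
`e₁ u * _ * v e₂`, all of which land in `M`, separate points too, so additivity of `h` on `M`
makes `f` additive everywhere, and symmetrically `h`, hence `g = h⁻¹`.
-/

open Function

section ElementaryPair

variable {T S : Type*}

structure IsElementaryPair [Mul T] [Mul S] (f h : T → S) : Prop where
  map_mul_mul : ∀ a u b, f (a * u * b) = f a * h u * f b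
  map_mul_mul' : ∀ u a v, h (u * a * v) = h u * f a * h v
  bijective : Bijective f
  bijective' : Bijective h

namespace IsElementaryPair

variable {f h : T → S}

theorem symm [Mul T] [Mul S] (p : IsElementaryPair f h) : IsElementaryPair h f :=
  ⟨p.map_mul_mul', p.map_mul_mul, p.bijective', p.bijective⟩

theorem map_zero [MulZeroClass T] [MulZeroClass S] (p : IsElementaryPair f h) : f 0 = 0 := by
  obtain ⟨u, hu⟩ := p.bijective'.2 0
  simpa [hu] using p.map_mul_mul 0 u 0

theorem map_add_of_separating [Mul T] [Add T] [NonUnitalNonAssocSemiring S]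
    (p : IsElementaryPair f h) (P : Set (T × T))
    (hP : ∀ w w' : T, (∀ q ∈ P, q.1 * w * q.2 = q.1 * w' * q.2) → w = w') {s t : T}
    (hadd : ∀ q ∈ P, h (q.1 * (s + t) * q.2) = h (q.1 * s * q.2) + h (q.1 * t * q.2)) :
    f (s + t) = f s + f t := by
  obtain ⟨w, hw⟩ := p.bijective.2 (f s + f t)
  suffices w = s + t by rw [← this, hw]
  refine hP w (s + t) fun q hq => p.bijective'.1 ?_
  rw [hadd q hq, p.map_mul_mul', hw, mul_add, add_mul, ← p.map_mul_mul', ← p.map_mul_mul']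

end IsElementaryPair

namespace IsElementaryMap

variable [MulOneClass T] [Mul S] {f : T → S} {g : S → T}

theorem eq_of_forall_map_mul_mul (helem : IsElementaryMap f g) (hg : Surjective g) {s t : T}
    (hst : ∀ x y : S, g (x * f s * y) = g (x * f t * y)) : s = t := by
  have key : ∀ u v : T, u * s * v = u * t * v := by
    intro u v
    obtain ⟨x, rfl⟩ := hg u
    obtain ⟨y, rfl⟩ := hg v
    rw [← helem.2, ← helem.2, hst]
  simpa using key 1 1

theorem injective (helem : IsElementaryMap f g) (hg : Surjective g) : Injective f :=
  fun _ _ hst => helem.eq_of_forall_map_mul_mul hg fun _ _ => by rw [hst]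

theorem injective' (helem : IsElementaryMap f g) (hf : Surjective f) (hg : Surjective g) :
    Injective g := by
  intro x y hxy
  obtain ⟨s, rfl⟩ := hf x
  obtain ⟨t, rfl⟩ := hf y
  suffices s = t by rw [this]
  refine helem.eq_of_forall_map_mul_mul hg fun x y => ?_
  obtain ⟨a, rfl⟩ := hf x
  obtain ⟨b, rfl⟩ := hf y
  rw [← helem.1, ← helem.1, hxy]

theorem isElementaryPair [Nonempty S] (helem : IsElementaryMap f g) (hf : Surjective f)
    (hg : Surjective g) : IsElementaryPair f (invFun g) := by
  have hgh : RightInverse (invFun g) g := rightInverse_invFun hg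
  have hhg : LeftInverse (invFun g) g := leftInverse_invFun (helem.injective' hf hg)
  refine ⟨fun a u b => ?_, fun u a v => ?_, ⟨helem.injective hg, hf⟩,
    ⟨hgh.injective, hhg.surjective⟩⟩
  · rw [← helem.1, hgh]
  · rw [← hhg (_ * _ * _), helem.2, hgh, hgh]

end IsElementaryMap

end ElementaryPair

namespace Tri

variable {A M B : Type*}

attribute [ext] Tri

section Add

variable [Add A] [Add M] [Add B]

@[simp] theorem add_fst (x y : Tri A M B) : (x + y).fst = x.fst + y.fst := rfl
@[simp] theorem add_mid (x y : Tri A M B) : (x + y).mid = x.mid + y.mid := rfl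
@[simp] theorem add_snd (x y : Tri A M B) : (x + y).snd = x.snd + y.snd := rfl

@[simp] theorem mk_add_mk (a a' : A) (m m' : M) (b b' : B) :
    (⟨a, m, b⟩ + ⟨a', m', b'⟩ : Tri A M B) = ⟨a + a', m + m', b + b'⟩ := rfl

end Add

section Zero

variable [Zero A] [Zero M] [Zero B]

@[simp] theorem zero_fst : (0 : Tri A M B).fst = 0 := rfl
@[simp] theorem zero_mid : (0 : Tri A M B).mid = 0 := rfl
@[simp] theorem zero_snd : (0 : Tri A M B).snd = 0 := rfl
@[simp] theorem mk_zero : (⟨0, 0, 0⟩ : Tri A M B) = 0 := rfl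

end Zero

section One

variable [One A] [Zero M] [One B]

instance : One (Tri A M B) := ⟨⟨1, 0, 1⟩⟩

@[simp] theorem one_fst : (1 : Tri A M B).fst = 1 := rfl
@[simp] theorem one_mid : (1 : Tri A M B).mid = 0 := rfl
@[simp] theorem one_snd : (1 : Tri A M B).snd = 1 := rfl

theorem one_def : (1 : Tri A M B) = ⟨1, 0, 1⟩ := rfl

end One

def e₁ [One A] [Zero M] [Zero B] : Tri A M B := ⟨1, 0, 0⟩

def e₂ [Zero A] [Zero M] [One B] : Tri A M B := ⟨0, 0, 1⟩

def cornerPairs [Zero A] [One A] [Zero M] [Zero B] [One B] : Set (Tri A M B × Tri A M B) :=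
  {(e₁, e₁), (e₁, e₂), (e₂, e₂)}

section Mul

variable [Mul A] [Mul B] [Add M] [SMul A M] [SMul Bᵐᵒᵖ M]

@[simp] theorem mul_fst (x y : Tri A M B) : (x * y).fst = x.fst * y.fst := rfl
@[simp] theorem mul_mid (x y : Tri A M B) :
    (x * y).mid = x.fst • y.mid + op y.snd • x.mid := rfl
@[simp] theorem mul_snd (x y : Tri A M B) : (x * y).snd = x.snd * y.snd := rfl

@[simp] theorem mk_mul_mk (a a' : A) (m m' : M) (b b' : B) :
    (⟨a, m, b⟩ * ⟨a', m', b'⟩ : Tri A M B) = ⟨a * a', a • m' + op b' • m, b * b'⟩ := rfl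

end Mul

section AddCommGroup

variable [AddCommGroup A] [AddCommGroup M] [AddCommGroup B]

instance : Neg (Tri A M B) := ⟨fun x => ⟨-x.fst, -x.mid, -x.snd⟩⟩

@[simp] theorem neg_fst (x : Tri A M B) : (-x).fst = -x.fst := rfl
@[simp] theorem neg_mid (x : Tri A M B) : (-x).mid = -x.mid := rfl
@[simp] theorem neg_snd (x : Tri A M B) : (-x).snd = -x.snd := rfl

instance : AddCommGroup (Tri A M B) where
  add_assoc _ _ _ := by ext <;> simp [add_assoc]
  zero_add _ := by ext <;> simp
  add_zero _ := by ext <;> simp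
  add_comm _ _ := by ext <;> simp [add_comm]
  neg_add_cancel _ := by ext <;> simp
  nsmul := nsmulRec
  zsmul := zsmulRec

end AddCommGroup

section Ring

variable [Ring A] [Ring B] [AddCommGroup M] [Module A M] [Module Bᵐᵒᵖ M]

instance [SMulCommClass A Bᵐᵒᵖ M] : Ring (Tri A M B) where
  mul_assoc x y z := by
    ext
    · simp [mul_assoc]
    · simp only [mul_mid, mul_fst, mul_snd, smul_add, mul_smul, op_mul,
        smul_comm x.fst (op z.snd)]
      abel
    · simp [mul_assoc]
  one_mul _ := by ext <;> simp
  mul_one _ := by ext <;> simp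
  left_distrib _ _ _ := by
    ext <;> simp [mul_add, smul_add, add_smul]
    abel
  right_distrib _ _ _ := by
    ext <;> simp [add_mul, smul_add, add_smul]
    abel
  zero_mul _ := by ext <;> simp
  mul_zero _ := by ext <;> simp

theorem e₁_mul_mul_e₁ (w : Tri A M B) : e₁ * w * e₁ = ⟨w.fst, 0, 0⟩ := by ext <;> simp [e₁]

theorem e₁_mul_mul_e₂ (w : Tri A M B) : e₁ * w * e₂ = ⟨0, w.mid, 0⟩ := by
  ext <;> simp [e₁, e₂]

theorem e₂_mul_mul_e₂ (w : Tri A M B) : e₂ * w * e₂ = ⟨0, 0, w.snd⟩ := by ext <;> simp [e₂]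

theorem eq_of_forall_mem_cornerPairs {w w' : Tri A M B}
    (h : ∀ q ∈ cornerPairs, q.1 * w * q.2 = q.1 * w' * q.2) : w = w' := by
  simp only [cornerPairs, Set.mem_insert_iff, Set.mem_singleton_iff, forall_eq_or_imp,
    forall_eq, e₁_mul_mul_e₁, e₁_mul_mul_e₂, e₂_mul_mul_e₂, mk.injEq] at h
  ext
  exacts [h.1.1, h.2.1.2.1, h.2.2.2.2]

theorem eq_of_forall_mid_mul_mul
    (hA : ∀ a : A, (∀ m : M, a • m = 0) → a = 0) (hB : ∀ b : Bᵐᵒᵖ, (∀ m : M, b • m = 0) → b = 0)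
    {w w' : Tri A M B} (h : ∀ u v, (u * w * v).mid = (u * w' * v).mid) : w = w' := by
  ext
  · refine sub_eq_zero.1 (hA _ fun m => ?_)
    simpa [sub_smul, sub_eq_zero] using h 1 ⟨0, m, 0⟩
  · simpa using h 1 1
  · refine op_injective (sub_eq_zero.1 (hB _ fun m => ?_))
    simpa [sub_smul, sub_eq_zero] using h ⟨0, m, 0⟩ 1

end Ring

end Tri

namespace IsElementaryPair

open Tri

variable {A M B S : Type*} [Ring A] [Ring B] [AddCommGroup M] [Module A M] [Module Bᵐᵒᵖ M]
  [SMulCommClass A Bᵐᵒᵖ M] [NonUnitalRing S] {f h : Tri A M B → S}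

theorem map_add_of_disjoint_corners (p : IsElementaryPair f h) {s t : Tri A M B}
    (hst : ∀ q ∈ cornerPairs, q.1 * s * q.2 = 0 ∨ q.1 * t * q.2 = 0) : f (s + t) = f s + f t := by
  refine p.map_add_of_separating cornerPairs (fun _ _ => eq_of_forall_mem_cornerPairs)
    fun q hq => ?_
  rcases hst q hq with h0 | h0 <;> simp [mul_add, add_mul, h0, p.symm.map_zero]

theorem map_mid_add (p : IsElementaryPair f h) (m m' : M) :
    f ⟨0, m + m', 0⟩ = f ⟨0, m, 0⟩ + f ⟨0, m', 0⟩ := by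
  have e₁_add : f (e₁ + ⟨0, m', 0⟩) = f e₁ + f ⟨0, m', 0⟩ :=
    p.map_add_of_disjoint_corners (by simp [cornerPairs, e₁, e₂])
  have add_e₂ : f (⟨0, m, 0⟩ + e₂) = f ⟨0, m, 0⟩ + f e₂ :=
    p.map_add_of_disjoint_corners (by simp [cornerPairs, e₁, e₂])
  calc f ⟨0, m + m', 0⟩ = f ((e₁ + ⟨0, m', 0⟩) * 1 * (⟨0, m, 0⟩ + e₂)) := by
        simp [e₁, e₂, one_def]
    _ = f (e₁ * 1 * ⟨0, m, 0⟩) + f (e₁ * 1 * e₂) + f (⟨0, m', 0⟩ * 1 * ⟨0, m, 0⟩)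
          + f (⟨0, m', 0⟩ * 1 * e₂) := by
        simp only [p.map_mul_mul, e₁_add, add_e₂]
        noncomm_ring
    _ = f ⟨0, m, 0⟩ + f ⟨0, m', 0⟩ := by simp [e₁, e₂, one_def, p.map_zero]

theorem map_add (p : IsElementaryPair f h)
    (hA : ∀ a : A, (∀ m : M, a • m = 0) → a = 0) (hB : ∀ b : Bᵐᵒᵖ, (∀ m : M, b • m = 0) → b = 0)
    (s t : Tri A M B) : f (s + t) = f s + f t := by
  have sandwich (u v x : Tri A M B) : e₁ * u * x * (v * e₂) = ⟨0, (u * x * v).mid, 0⟩ := by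
    rw [← e₁_mul_mul_e₂]; noncomm_ring
  refine p.map_add_of_separating
    (Set.range fun uv : Tri A M B × Tri A M B => (e₁ * uv.1, uv.2 * e₂))
    (fun w w' hw => eq_of_forall_mid_mul_mul hA hB fun u v => ?_) ?_
  · simpa [sandwich] using hw _ ⟨(u, v), rfl⟩
  · rintro _ ⟨⟨u, v⟩, rfl⟩
    rw [sandwich, sandwich, sandwich, mul_add, add_mul, add_mid, p.symm.map_mid_add]

end IsElementaryPair

theorem elementary_map_additive_unital_general
    {A B M R' : Type*}
    [Ring A] [Ring B]
    [AddCommGroup M]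
    [Module A M] [Module Bᵐᵒᵖ M] [SMulCommClass A Bᵐᵒᵖ M]
    (hfaithfulA : ∀ a : A, (∀ m : M, a • m = 0) → a = 0)
    (hfaithfulB : ∀ b : Bᵐᵒᵖ, (∀ m : M, b • m = 0) → b = 0)
    [NonUnitalRing R']
    (f : Tri A M B → R') (g : R' → Tri A M B)
    (hf : Function.Surjective f) (hg : Function.Surjective g)
    (helem : IsElementaryMap f g)
    :
    (∀ s t : Tri A M B, f (s + t) = f s + f t) ∧
    (∀ x y : R', g (x + y) = g x + g y) := by
  have p := helem.isElementaryPair hf hg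
  have hgh : RightInverse (invFun g) g := rightInverse_invFun hg
  have hhg : LeftInverse (invFun g) g := leftInverse_invFun (helem.injective' hf hg)
  refine ⟨p.map_add hfaithfulA hfaithfulB, fun x y => ?_⟩
  calc g (x + y) = g (invFun g (g x) + invFun g (g y)) := by rw [hhg, hhg]
    _ = g (invFun g (g x + g y)) := by rw [p.symm.map_add hfaithfulA hfaithfulB]
    _ = g x + g y := hgh _

/-- Elementary surjective maps on triangular algebras over unital algebras are additive. -/
theorem elementary_map_additive_unital
    {R A B M R' : Type*} [CommRing R]
    [Ring A] [Algebra R A] [Ring B] [Algebra R B]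
    [AddCommGroup M] [Module R M]
    [Module A M] [Module Bᵐᵒᵖ M] [SMulCommClass A Bᵐᵒᵖ M]
    (hfaithfulA : ∀ a : A, (∀ m : M, a • m = 0) → a = 0)
    (hfaithfulB : ∀ b : Bᵐᵒᵖ, (∀ m : M, b • m = 0) → b = 0)
    [NonUnitalRing R']
    (f : Tri A M B → R') (g : R' → Tri A M B)
    (hf : Function.Surjective f) (hg : Function.Surjective g)
    (helem : IsElementaryMap f g)
    :
    (∀ s t : Tri A M B, f (s + t) = f s + f t) ∧
    (∀ x y : R', g (x + y) = g x + g y) :=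
  elementary_map_additive_unital_general hfaithfulA hfaithfulB f g hf hg helem
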